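/- arXiv:2005.13847 — 3 statements merged into one kernel-verified Lean document; each statement's English description precedes it below -/
import Mathlib

section
/- Let $\Lambda \ge 2$, $t \in \{0,1,\dots,\Lambda-1\}$, and let $\mathbf{L}=(l_1,\dots,l_\Lambda)$ be a nonincreasing sequence of nonnegative integers summing to $K$. Then $T(\mathbf{L}) := \sum_{\lambda=1}^{\Lambda-t} l_\lambda \binom{\Lambda-\lambda}{t}/\binom{\Lambda}{t} \ge \frac{\Lambda-t}{1+t}\left( \frac{l_1 t}{\Lambda-1} + \frac{K}{\Lambda}\cdot\frac{\Lambda-t-1}{\Lambda-1} \right)$. -/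
lemma hockey (Λ t : ℕ) (hΛ : 2 ≤ Λ) :
    ∑ lam ∈ Finset.Icc 2 Λ, Nat.choose (Λ - lam) t = Nat.choose (Λ - 1) (t + 1) := by
  have h1 : ∑ lam ∈ Finset.Icc 2 Λ, Nat.choose (Λ - lam) t
      = ∑ m ∈ Finset.Icc 0 (Λ - 2), Nat.choose m t := by
    refine Finset.sum_nbij' (i := fun lam => Λ - lam) (j := fun m => Λ - m) ?_ ?_ ?_ ?_ ?_
    all_goals intro a ha
    all_goals simp only [Finset.mem_Icc] at *
    · omega
    · omega
    · omega
    · omega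
  rw [h1]
  rcases le_or_gt t (Λ - 2) with h | h
  · have h2 : ∑ m ∈ Finset.Icc 0 (Λ - 2), Nat.choose m t
        = ∑ m ∈ Finset.Icc t (Λ - 2), Nat.choose m t := by
      refine (Finset.sum_subset (Finset.Icc_subset_Icc_left (Nat.zero_le t)) ?_).symm
      intro x hx hx'
      simp only [Finset.mem_Icc] at hx hx'
      exact Nat.choose_eq_zero_of_lt (by omega)
    rw [h2, Nat.sum_Icc_choose]
    congr 1
    omega
  · have h2 : ∀ m ∈ Finset.Icc 0 (Λ - 2), Nat.choose m t = 0 := by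
      intro m hm; simp only [Finset.mem_Icc] at hm
      exact Nat.choose_eq_zero_of_lt (by omega)
    rw [Finset.sum_eq_zero h2, Nat.choose_eq_zero_of_lt (by omega)]

set_option maxHeartbeats 1000000 in
/-- Lower bound on the delivery time `T(L)` in terms of `l₁` and the total `K`. -/
theorem stmt2 (Λ t K : ℕ) (hΛ : 2 ≤ Λ) (ht : t ≤ Λ - 1) (l : ℕ → ℕ)
    (hmono : ∀ i j, 1 ≤ i → i ≤ j → j ≤ Λ → l j ≤ l i)
    (hsum : ∑ lam ∈ Finset.Icc 1 Λ, l lam = K) :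
    ∑ lam ∈ Finset.Icc 1 (Λ - t), (l lam : ℝ) * (Nat.choose (Λ - lam) t) / (Nat.choose Λ t)
      ≥ ((Λ : ℝ) - t) / (1 + t) *
          ((l 1 : ℝ) * t / ((Λ : ℝ) - 1) +
            (K : ℝ) / Λ * (((Λ : ℝ) - t - 1) / ((Λ : ℝ) - 1))) := by
  have htΛ : t + 1 ≤ Λ := by omega
  set A : ℝ := (Nat.choose Λ t : ℝ) with hA
  have hApos : 0 < A := by
    have := Nat.choose_pos (show t ≤ Λ by omega)
    positivity
  clear_value A
  have hΛ2 : (2:ℝ) ≤ (Λ:ℝ) := by exact_mod_cast hΛ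
  have hΛ1 : (0:ℝ) < (Λ:ℝ) - 1 := by linarith
  have hΛ0 : (0:ℝ) < (Λ:ℝ) := by linarith
  have ht1 : (0:ℝ) < 1 + (t:ℝ) := by positivity
  -- extend the sum to Icc 1 Λ
  have hext : ∑ lam ∈ Finset.Icc 1 (Λ - t), (l lam : ℝ) * (Nat.choose (Λ - lam) t) / A
      = ∑ lam ∈ Finset.Icc 1 Λ, (l lam : ℝ) * (Nat.choose (Λ - lam) t) / A := by
    refine Finset.sum_subset (Finset.Icc_subset_Icc_right (by omega)) ?_
    intro x hx hx'
    simp only [Finset.mem_Icc] at hx hx'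
    rw [Nat.choose_eq_zero_of_lt (by omega)]
    norm_num
  rw [hext]
  -- split off λ = 1
  have hsplit : Finset.Icc 1 Λ = insert 1 (Finset.Icc 2 Λ) := by
    ext x; simp only [Finset.mem_insert, Finset.mem_Icc]; omega
  have hnotmem : (1 : ℕ) ∉ Finset.Icc 2 Λ := by simp
  -- Chebyshev on Icc 2 Λ
  have hmv : MonovaryOn (fun lam => (l lam : ℝ))
      (fun lam => (Nat.choose (Λ - lam) t : ℝ)) (Finset.Icc 2 Λ) := by
    intro i hi j hj hg
    dsimp only at hg ⊢
    simp only [Finset.coe_Icc, Set.mem_Icc] at hi hj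
    have hji : j ≤ i := by
      by_contra hc
      push_neg at hc
      have : Nat.choose (Λ - j) t ≤ Nat.choose (Λ - i) t :=
        Nat.choose_le_choose t (by omega)
      exact absurd hg (by exact_mod_cast not_lt.2 this)
    exact_mod_cast hmono j i (by omega) hji (by omega)
  have hcheb := hmv.sum_mul_sum_le_card_mul_sum
  rw [Nat.card_Icc] at hcheb
  have hsumL : ∑ lam ∈ Finset.Icc 2 Λ, (l lam : ℝ) = (K : ℝ) - (l 1 : ℝ) := by
    have h : ∑ lam ∈ Finset.Icc 1 Λ, (l lam : ℝ) = (K : ℝ) := by exact_mod_cast congrArg Nat.cast hsum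
    rw [hsplit, Finset.sum_insert hnotmem] at h
    linarith
  have hsumC : ∑ lam ∈ Finset.Icc 2 Λ, (Nat.choose (Λ - lam) t : ℝ)
      = (Nat.choose (Λ - 1) (t + 1) : ℝ) := by
    exact_mod_cast congrArg Nat.cast (hockey Λ t hΛ)
  rw [hsumL, hsumC] at hcheb
  have hcoef : ((Λ + 1 - 2 : ℕ) : ℝ) = (Λ:ℝ) - 1 := by
    have h : Λ + 1 - 2 = Λ - 1 := by omega
    rw [h, Nat.cast_sub (by omega)]
    norm_num
  rw [hcoef] at hcheb
  -- binomial identities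
  have id2 : ((Λ:ℝ)) * (Nat.choose (Λ - 1) t : ℝ) = ((Λ:ℝ) - t) * A := by
    have h := Nat.choose_mul_succ_eq (Λ - 1) t
    have hΛ' : Λ - 1 + 1 = Λ := by omega
    rw [hΛ'] at h
    have h2 : ((Nat.choose (Λ - 1) t * Λ : ℕ) : ℝ) = ((Nat.choose Λ t * (Λ - t) : ℕ) : ℝ) := by
      exact_mod_cast congrArg Nat.cast h
    push_cast [Nat.cast_sub (show t ≤ Λ by omega)] at h2
    rw [hA]; linarith
  have id3 : ((Λ:ℝ)) * (1 + t) * (Nat.choose (Λ - 1) (t + 1) : ℝ)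
      = ((Λ:ℝ) - t) * ((Λ:ℝ) - t - 1) * A := by
    have h1 := Nat.choose_succ_right_eq Λ t
    have h2 := Nat.choose_mul_succ_eq (Λ - 1) (t + 1)
    have hΛ' : Λ - 1 + 1 = Λ := by omega
    rw [hΛ'] at h2
    have h1' : ((Nat.choose Λ (t+1) : ℝ)) * ((t:ℝ) + 1) = (Nat.choose Λ t : ℝ) * ((Λ:ℝ) - t) := by
      have h := congrArg (Nat.cast : ℕ → ℝ) h1
      push_cast [Nat.cast_sub (show t ≤ Λ by omega)] at h
      linarith
    have h2' : ((Nat.choose (Λ - 1) (t+1) : ℝ)) * (Λ:ℝ) = (Nat.choose Λ (t+1) : ℝ) * ((Λ:ℝ) - t - 1) := by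
      have h := congrArg (Nat.cast : ℕ → ℝ) h2
      push_cast [Nat.cast_sub (show t + 1 ≤ Λ from htΛ)] at h
      linarith
    rw [hA]
    nlinarith [h1', h2']
  -- lower bound
  rw [hsplit, Finset.sum_insert hnotmem]
  have hSig : ((K:ℝ) - l 1) * (Nat.choose (Λ - 1) (t + 1) : ℝ) / ((Λ:ℝ) - 1)
      ≤ ∑ lam ∈ Finset.Icc 2 Λ, (l lam : ℝ) * (Nat.choose (Λ - lam) t : ℝ) := by
    rw [div_le_iff₀ hΛ1]
    linarith [hcheb]
  have hterm : ∀ lam ∈ Finset.Icc 2 Λ,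
      (l lam : ℝ) * (Nat.choose (Λ - lam) t) / A
        = (l lam : ℝ) * (Nat.choose (Λ - lam) t) * A⁻¹ := fun _ _ => div_eq_mul_inv _ _
  rw [Finset.sum_congr rfl hterm, ← Finset.sum_mul]
  have key : ((l 1 : ℝ) * (Nat.choose (Λ - 1) t) / A)
      + (((K:ℝ) - l 1) * (Nat.choose (Λ - 1) (t + 1) : ℝ) / ((Λ:ℝ) - 1)) * A⁻¹
      = ((Λ : ℝ) - t) / (1 + t) *
          ((l 1 : ℝ) * t / ((Λ : ℝ) - 1) +
            (K : ℝ) / Λ * (((Λ : ℝ) - t - 1) / ((Λ : ℝ) - 1))) := by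
    have hc1 : (Nat.choose (Λ - 1) t : ℝ) = ((Λ:ℝ) - t) * A / Λ := by
      rw [eq_div_iff (ne_of_gt hΛ0)]
      linarith [id2]
    have hc2 : (Nat.choose (Λ - 1) (t + 1) : ℝ) = ((Λ:ℝ) - t) * ((Λ:ℝ) - t - 1) * A / ((Λ:ℝ) * (1 + t)) := by
      rw [eq_div_iff (by positivity)]
      linarith [id3]
    rw [hc1, hc2]
    have hAne : A ≠ 0 := ne_of_gt hApos
    have h1ne : (Λ:ℝ) - 1 ≠ 0 := ne_of_gt hΛ1
    have h0ne : (Λ:ℝ) ≠ 0 := ne_of_gt hΛ0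
    have htne : 1 + (t:ℝ) ≠ 0 := ne_of_gt ht1
    field_simp
    ring
  calc (l 1 : ℝ) * (Nat.choose (Λ - 1) t) / A
        + (∑ lam ∈ Finset.Icc 2 Λ, (l lam : ℝ) * (Nat.choose (Λ - lam) t : ℝ)) * A⁻¹
      ≥ (l 1 : ℝ) * (Nat.choose (Λ - 1) t) / A
        + (((K:ℝ) - l 1) * (Nat.choose (Λ - 1) (t + 1) : ℝ) / ((Λ:ℝ) - 1)) * A⁻¹ := by
        gcongr
    _ = _ := key
end

section
/- Let $K, \Lambda, t, \hat{K}$ be nonnegative integers with $t < \Lambda$, $0 < \hat{K} < \Lambda - t$, and $K = \lfloor K/\Lambda \rfloor \Lambda + \hat{K}$. Then $\sum_{\lambda=1}^{\hat K}\left(\lfloor K/\Lambda\rfloor + 1\right)\frac{\binom{\Lambda-\lambda}{t}}{\binom{\Lambda}{t}} + \sum_{\lambda=\hat K+1}^{\Lambda-t}\lfloor K/\Lambda\rfloor \frac{\binom{\Lambda-\lambda}{t}}{\binom{\Lambda}{t}} = \frac{\Lambda-t}{1+t}\left( \lfloor K/\Lambda \rfloor + 1 - \frac{\prod_{i=t+1}^{\hat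 K + t}(\Lambda-i)}{\prod_{j=0}^{\hat K - 1}(\Lambda - j)} \right)$. -/
lemma dF_add (n a b : ℕ) :
    n.descFactorial (a + b) = n.descFactorial a * (n - a).descFactorial b := by
  induction b with
  | zero => simp
  | succ b ih =>
    rw [show a + (b + 1) = (a + b) + 1 by ring, Nat.descFactorial_succ, ih,
      Nat.descFactorial_succ, show n - (a + b) = n - a - b by omega]
    ring

lemma sum_choose_aux (n t : ℕ) :
    ∑ lam ∈ Finset.Icc 1 (n - t), (n - lam).choose t = n.choose (t + 1) := by
  rcases le_or_gt n t with h | h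
  · rw [show n - t = 0 by omega, Nat.choose_eq_zero_of_lt (show n < t + 1 by omega)]
    simp
  · have : ∑ lam ∈ Finset.Icc 1 (n - t), (n - lam).choose t
        = ∑ m ∈ Finset.Icc t (n - 1), m.choose t := by
      refine Finset.sum_nbij' (fun lam => n - lam) (fun m => n - m) ?_ ?_ ?_ ?_ ?_ <;>
        intro a ha <;> simp only [Finset.mem_Icc] at * <;> omega
    rw [this, Nat.sum_Icc_choose, show n - 1 + 1 = n by omega]

/-- Closed form for the minimum delivery time `T_min` when `Λ ∤ K`. -/
theorem stmt8 (K Λ t Khat : ℕ) (ht : t < Λ) (h1 : 0 < Khat) (h2 : Khat < Λ - t)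
    (hK : K = (K / Λ) * Λ + Khat) :
    (∑ lam ∈ Finset.Icc 1 Khat,
        (((K / Λ : ℕ) : ℝ) + 1) * (Nat.choose (Λ - lam) t) / (Nat.choose Λ t)) +
      (∑ lam ∈ Finset.Icc (Khat + 1) (Λ - t),
        ((K / Λ : ℕ) : ℝ) * (Nat.choose (Λ - lam) t) / (Nat.choose Λ t))
      = ((Λ : ℝ) - t) / (1 + t) *
        (((K / Λ : ℕ) : ℝ) + 1 -
          (∏ i ∈ Finset.Icc (t + 1) (Khat + t), ((Λ : ℝ) - i)) /
          (∏ j ∈ Finset.range Khat, ((Λ : ℝ) - j))) := by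
  set q : ℝ := ((K / Λ : ℕ) : ℝ) with hq
  -- natural number quantities
  set A : ℕ := ∑ lam ∈ Finset.Icc 1 Khat, (Λ - lam).choose t with hA
  set B : ℕ := ∑ lam ∈ Finset.Icc (Khat + 1) (Λ - t), (Λ - lam).choose t with hB
  set C : ℕ := Λ.choose t with hC
  set P : ℕ := Λ.choose (t + 1) with hP
  set D1 : ℕ := (Λ - t - 1).descFactorial Khat with hD1
  set D2 : ℕ := Λ.descFactorial Khat with hD2
  -- sums rewrite
  have hsum1 : (∑ lam ∈ Finset.Icc 1 Khat,
      (q + 1) * ((Λ - lam).choose t : ℝ) / (C : ℝ)) = (q + 1) * (A : ℝ) / (C : ℝ) := by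
    rw [← Finset.sum_div, ← Finset.mul_sum, hA, Nat.cast_sum]
  have hsum2 : (∑ lam ∈ Finset.Icc (Khat + 1) (Λ - t),
      q * ((Λ - lam).choose t : ℝ) / (C : ℝ)) = q * (B : ℝ) / (C : ℝ) := by
    rw [← Finset.sum_div, ← Finset.mul_sum, hB, Nat.cast_sum]
  -- A + B = P
  have hAB : A + B = P := by
    rw [hA, hB, hP, ← sum_choose_aux Λ t, ← Finset.sum_union (by
      rw [Finset.disjoint_left]; intro a ha hb
      simp only [Finset.mem_Icc] at ha hb; omega)]
    congr 1
    ext a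
    simp only [Finset.mem_union, Finset.mem_Icc]
    omega
  -- B = (Λ - Khat).choose (t+1)
  have hBval : B = (Λ - Khat).choose (t + 1) := by
    rw [hB, ← sum_choose_aux (Λ - Khat) t]
    refine Finset.sum_nbij' (fun lam => lam - Khat) (fun m => m + Khat) ?_ ?_ ?_ ?_ ?_ <;>
      intro a ha <;> simp only [Finset.mem_Icc] at * <;>
      [omega; omega; omega; omega; skip]
    congr 1
    omega
  -- key nat identities
  have hrel1 : P * (t + 1) = C * (Λ - t) := Nat.choose_succ_right_eq Λ t
  have hrel2 : (t + 1) * B * D2 = (Λ - t) * D1 * C := by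
    have hdf : (Λ - Khat).descFactorial (t + 1) * Λ.descFactorial Khat
        = (Λ - t) * ((Λ - t - 1).descFactorial Khat) * Λ.descFactorial t := by
      have e1 : Λ.descFactorial (Khat + (t + 1))
          = Λ.descFactorial Khat * (Λ - Khat).descFactorial (t + 1) := dF_add ..
      have e2 : Λ.descFactorial (t + (Khat + 1))
          = Λ.descFactorial t * (Λ - t).descFactorial (Khat + 1) := dF_add ..
      have e3 : (Λ - t).descFactorial (Khat + 1)
          = (Λ - t) * ((Λ - t - 1).descFactorial Khat) := by
        have : Λ - t = (Λ - t - 1) + 1 := by omega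
        rw [this, Nat.succ_descFactorial_succ, ← this]
      have e4 : Khat + (t + 1) = t + (Khat + 1) := by ring
      rw [e4, e2, e3] at e1
      nlinarith [e1]
    have hmul : Nat.factorial t * ((t + 1) * B * D2) = Nat.factorial t * ((Λ - t) * D1 * C) := by
      have hBdf : (Λ - Khat).descFactorial (t + 1) = Nat.factorial (t + 1) * B := by
        rw [hBval, Nat.descFactorial_eq_factorial_mul_choose]
      have hCdf : Λ.descFactorial t = Nat.factorial t * C := by
        rw [hC, Nat.descFactorial_eq_factorial_mul_choose]
      rw [hBdf, hCdf] at hdf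
      calc Nat.factorial t * ((t + 1) * B * D2) = Nat.factorial (t + 1) * B * D2 := by
            rw [Nat.factorial_succ]; ring
        _ = (Λ - t) * D1 * (Nat.factorial t * C) := by rw [← hdf]
        _ = Nat.factorial t * ((Λ - t) * D1 * C) := by ring
    exact Nat.eq_of_mul_eq_mul_left t.factorial_pos hmul
  -- products rewrite
  have hprod : ∀ (N k : ℕ), k ≤ N →
      (∏ j ∈ Finset.range k, ((N : ℝ) - j)) = (N.descFactorial k : ℝ) := by
    intro N k hk
    rw [Nat.descFactorial_eq_prod_range, Nat.cast_prod]
    refine Finset.prod_congr rfl fun j hj => ?_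
    simp only [Finset.mem_range] at hj
    rw [Nat.cast_sub (by omega)]
  have hD2R : (∏ j ∈ Finset.range Khat, ((Λ : ℝ) - j)) = (D2 : ℝ) :=
    hprod Λ Khat (by omega)
  have hD1R : (∏ i ∈ Finset.Icc (t + 1) (Khat + t), ((Λ : ℝ) - i)) = (D1 : ℝ) := by
    rw [← hprod (Λ - t - 1) Khat (by omega)]
    refine Finset.prod_nbij' (fun i => i - (t + 1)) (fun j => j + (t + 1)) ?_ ?_ ?_ ?_ ?_ <;>
      intro a ha <;> simp only [Finset.mem_Icc, Finset.mem_range] at * <;>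
      [omega; omega; omega; omega; skip]
    have h1 : ((a - (t + 1) : ℕ) : ℝ) = (a : ℝ) - (t + 1) := by
      rw [Nat.cast_sub (by omega)]; push_cast; ring
    have h2 : ((Λ - t - 1 : ℕ) : ℝ) = (Λ : ℝ) - t - 1 := by
      rw [Nat.cast_sub (by omega), Nat.cast_sub (by omega)]; push_cast; ring
    rw [h1, h2]; ring
  rw [hsum1, hsum2, hD1R, hD2R]
  -- cast relations to ℝ
  have hCpos : (0 : ℝ) < (C : ℝ) := by
    exact_mod_cast Nat.choose_pos (le_of_lt ht)
  have hD2pos : (0 : ℝ) < (D2 : ℝ) := by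
    have : 0 < D2 := Nat.pos_of_ne_zero fun h => by
      rw [hD2, Nat.descFactorial_eq_zero_iff_lt] at h; omega
    exact_mod_cast this
  have htpos : (0 : ℝ) < 1 + (t : ℝ) := by positivity
  have hABR : (A : ℝ) + (B : ℝ) = (P : ℝ) := by exact_mod_cast hAB
  have hrel1R : (P : ℝ) * (1 + t) = (C : ℝ) * ((Λ : ℝ) - t) := by
    have := hrel1
    have h := congrArg (fun n : ℕ => (n : ℝ)) this
    push_cast [Nat.cast_sub (le_of_lt ht)] at h
    linarith [h]
  have hrel2R : (1 + (t : ℝ)) * (B : ℝ) * (D2 : ℝ)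
      = ((Λ : ℝ) - t) * (D1 : ℝ) * (C : ℝ) := by
    have h := congrArg (fun n : ℕ => (n : ℝ)) hrel2
    push_cast [Nat.cast_sub (le_of_lt ht)] at h
    linarith [h]
  field_simp
  ring_nf
  linear_combination ((q + 1) * (1 + (t : ℝ)) * (D2 : ℝ)) * hABR
    + ((q + 1) * (D2 : ℝ)) * hrel1R - hrel2R
end

section
/- Among all nonincreasing nonnegative integer sequences $(l_1,\dots,l_\Lambda)$ with $\sum_\lambda l_\lambda = K$, the quantity $T(\mathbf{L}) = \sum_{\lambda=1}^{\Lambda-t} l_\lambda \binom{\Lambda-\lambda}{t}/\binom{\Lambda}{t}$ is minimized by the balanced profile with $l_\lambda = \lfloor K/\Lambda\rfloor + 1$ for $\lambda \le \hat K$ and $l_\lambda = \lfloor K/\Lambda\rfloor$ for $\lambda > \hat K$, where $\hat K = K - \lfloor K/\Lambda\rfloor \Lambda$. -/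
/-!
The weights `(Λ - λ).choose t` are nonnegative and nonincreasing in `λ`, so by Abel summation
it suffices that every partial sum of a nonincreasing profile dominates the corresponding
partial sum `m * (K / Λ) + min m (K % Λ)` of the balanced profile. For a prefix of length `m`,
compare with the entry `l m` just after it: if `l m ≤ K / Λ` the tail carries at most `(Λ - m) * (K / Λ)`,
otherwise each of the `m` prefix entries exceeds `K / Λ`.
-/

open Finset

theorem sum_Icc_one_eq_sum_range {M : Type*} [AddCommMonoid M] (f : ℕ → M) (n : ℕ) :
    ∑ i ∈ Icc 1 n, f i = ∑ i ∈ range n, f (i + 1) := by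
  rw [← Ico_add_one_right_eq_Icc, range_eq_Ico, sum_Ico_add', zero_add]

theorem sum_mul_le_sum_mul_of_sum_range_le {R : Type*} [CommRing R] [LinearOrder R]
    [IsStrictOrderedRing R] {a b w : ℕ → R} (n : ℕ) (hw : Antitone w) (hw₀ : ∀ i, 0 ≤ w i)
    (hab : ∀ k ≤ n, ∑ i ∈ range k, a i ≤ ∑ i ∈ range k, b i) :
    ∑ i ∈ range n, a i * w i ≤ ∑ i ∈ range n, b i * w i := by
  have hD : ∀ k ≤ n, 0 ≤ ∑ i ∈ range k, (b i - a i) := fun k hk => by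
    rw [sum_sub_distrib]
    exact sub_nonneg.2 (hab k hk)
  have hdiff : ∑ i ∈ range n, b i * w i - ∑ i ∈ range n, a i * w i
      = ∑ i ∈ range n, w i • (b i - a i) := by
    simp only [← sum_sub_distrib, smul_eq_mul, mul_sub, mul_comm]
  rw [← sub_nonneg, hdiff, sum_range_by_parts, sub_nonneg]
  refine le_trans (sum_nonpos fun i hi => ?_) (mul_nonneg (hw₀ _) (hD n le_rfl))
  rw [mem_range] at hi
  exact mul_nonpos_of_nonpos_of_nonneg (sub_nonpos.2 (hw (Nat.le_succ i))) (hD _ (by omega))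

theorem sum_range_ite_lt (q r m : ℕ) :
    ∑ i ∈ range m, (if i < r then q + 1 else q) = m * q + min m r := by
  induction m with
  | zero => simp
  | succ m ih =>
    rw [sum_range_succ, ih, add_one_mul]
    split_ifs <;> omega

theorem mul_div_add_min_mod_le_sum_range {l : ℕ → ℕ} {n : ℕ}
    (hl : ∀ i j, i ≤ j → j < n → l j ≤ l i) {m : ℕ} (hm : m ≤ n) :
    m * ((∑ i ∈ range n, l i) / n) + min m ((∑ i ∈ range n, l i) % n)
      ≤ ∑ i ∈ range m, l i := by
  set K := ∑ i ∈ range n, l i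
  have hK : n * (K / n) + K % n = K := Nat.div_add_mod K n
  have hmin := min_le_right m (K % n)
  rcases hm.eq_or_lt with heq | hm
  · rw [heq]
    change _ ≤ K
    omega
  have hhead : m * l m ≤ ∑ i ∈ range m, l i := by
    simpa using sum_le_sum fun i hi => hl i m (mem_range.1 hi).le hm
  have htail : ∑ i ∈ Ico m n, l i ≤ (n - m) * l m := by
    simpa using sum_le_sum fun i hi => hl m i (mem_Ico.1 hi).1 (mem_Ico.1 hi).2
  have hsplit := sum_range_add_sum_Ico l hm.le
  rcases le_or_gt (l m) (K / n) with hlm | hlm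
  · have htail_le : (n - m) * l m ≤ (n - m) * (K / n) := Nat.mul_le_mul_left (n - m) hlm
    have hsplit_q : n * (K / n) = m * (K / n) + (n - m) * (K / n) := by
      rw [← add_mul, Nat.add_sub_cancel' hm.le]
    omega
  · have hhead_ge : m * (K / n + 1) ≤ m * l m := Nat.mul_le_mul_left m hlm
    have hmin_m := min_le_left m (K % n)
    rw [mul_add_one] at hhead_ge
    omega

theorem sum_Icc_mul_choose_sub_eq_sum_range (Λ t : ℕ) (f : ℕ → ℝ) :
    ∑ lam ∈ Icc 1 (Λ - t), f lam * (Λ - lam).choose t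
      = ∑ i ∈ range Λ, f (i + 1) * (Λ - (i + 1)).choose t := by
  rw [← sum_Icc_one_eq_sum_range (fun lam => f lam * (Λ - lam).choose t)]
  refine sum_subset (Icc_subset_Icc_right (Nat.sub_le Λ t)) fun lam hlam hlam' => ?_
  simp only [mem_Icc] at hlam hlam'
  rw [Nat.choose_eq_zero_of_lt (by omega), Nat.cast_zero, mul_zero]

theorem stmt10_general (Λ t K : ℕ) (l : ℕ → ℕ)
    (hmono : ∀ i j, 1 ≤ i → i ≤ j → j ≤ Λ → l j ≤ l i)
    (hsum : ∑ lam ∈ Finset.Icc 1 Λ, l lam = K) :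
    ∑ lam ∈ Finset.Icc 1 (Λ - t),
        ((if lam ≤ K % Λ then K / Λ + 1 else K / Λ : ℕ) : ℝ) *
          (Nat.choose (Λ - lam) t) / (Nat.choose Λ t)
      ≤ ∑ lam ∈ Finset.Icc 1 (Λ - t),
          (l lam : ℝ) * (Nat.choose (Λ - lam) t) / (Nat.choose Λ t) := by
  rw [← sum_div, ← sum_div, sum_Icc_mul_choose_sub_eq_sum_range,
    sum_Icc_mul_choose_sub_eq_sum_range]
  refine div_le_div_of_nonneg_right
    (sum_mul_le_sum_mul_of_sum_range_le Λ ?_ (fun i => Nat.cast_nonneg _) ?_) (Nat.cast_nonneg _)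
  · exact fun i j hij => Nat.cast_le.2 (Nat.choose_le_choose t (by omega))
  · intro k hk
    have hl : ∀ i j, i ≤ j → j < Λ → l (j + 1) ≤ l (i + 1) :=
      fun i j hij hj => hmono (i + 1) (j + 1) (by omega) (by omega) (by omega)
    have hK : ∑ i ∈ range Λ, l (i + 1) = K := by rw [← sum_Icc_one_eq_sum_range, hsum]
    have hpartial := mul_div_add_min_mod_le_sum_range hl hk
    rw [hK, ← sum_range_ite_lt] at hpartial
    simp only [Nat.add_one_le_iff]
    exact_mod_cast hpartial

/-- The balanced profile minimizes the delivery time among all nonincreasing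
nonnegative integer profiles summing to `K`. -/
theorem stmt10 (Λ t K : ℕ) (hΛ : 1 ≤ Λ) (ht : t < Λ) (l : ℕ → ℕ)
    (hmono : ∀ i j, 1 ≤ i → i ≤ j → j ≤ Λ → l j ≤ l i)
    (hsum : ∑ lam ∈ Finset.Icc 1 Λ, l lam = K) :
    ∑ lam ∈ Finset.Icc 1 (Λ - t),
        ((if lam ≤ K % Λ then K / Λ + 1 else K / Λ : ℕ) : ℝ) *
          (Nat.choose (Λ - lam) t) / (Nat.choose Λ t)
      ≤ ∑ lam ∈ Finset.Icc 1 (Λ - t),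
          (l lam : ℝ) * (Nat.choose (Λ - lam) t) / (Nat.choose Λ t) :=
  stmt10_general Λ t K l hmono hsum
end
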